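/- arXiv:2301.10311 — 3 statements merged into one kernel-verified Lean document; each statement's English description precedes it below -/
import Mathlib

section
/- Let x, y, z be binary relations on a type A. If x is total, y is a vector, and z is surjective, then the array write x[y↦z] = (y ⊓ zᵀ) ⊔ (yᶜ ⊓ x) is total. -/
variable {A : Type*}

/-- Relational composition. -/
def rcomp (r s : A → A → Prop) : A → A → Prop := fun a c => ∃ b, r a b ∧ s b c

/-- Relational converse (transposition). -/
def rconv (r : A → A → Prop) : A → A → Prop := fun a b => r b a

/-- The identity relation. -/
def rid : A → A → Prop := fun a b => a = b

/-- Reflexive-transitive closure. -/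
def rstar (r : A → A → Prop) : A → A → Prop := Relation.ReflTransGen r

/-- Transitive closure. -/
def rplus (r : A → A → Prop) : A → A → Prop := Relation.TransGen r

def RUnivalent (r : A → A → Prop) : Prop := rcomp (rconv r) r ≤ rid

def RInjective (r : A → A → Prop) : Prop := rcomp r (rconv r) ≤ rid

def RTotal (r : A → A → Prop) : Prop := rid ≤ rcomp r (rconv r)

def RSurjective (r : A → A → Prop) : Prop := rid ≤ rcomp (rconv r) r

def RMapping (r : A → A → Prop) : Prop := RUnivalent r ∧ RTotal r

def RVector (r : A → A → Prop) : Prop := rcomp r ⊤ = r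

def RPoint (r : A → A → Prop) : Prop := RVector r ∧ RInjective r ∧ RSurjective r

def RAcyclic (r : A → A → Prop) : Prop := rplus r ≤ ridᶜ

def RForest (p : A → A → Prop) : Prop := RMapping p ∧ RAcyclic (p ⊓ ridᶜ)

def RArc (r : A → A → Prop) : Prop := RPoint (rcomp r ⊤) ∧ RPoint (rcomp (rconv r) ⊤)

/-- Array write x[y↦z] = (y ⊓ zᵀ) ⊔ (yᶜ ⊓ x). -/
def rwrite (x y z : A → A → Prop) : A → A → Prop := (y ⊓ rconv z) ⊔ (yᶜ ⊓ x)

/-- Array read x[y] = xᵀ∘y. -/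
def rread (x y : A → A → Prop) : A → A → Prop := rcomp (rconv x) y

/-- Weakly-connected components: wcc(x) = (x ⊔ xᵀ)^*. -/
def wcc (x : A → A → Prop) : A → A → Prop := rstar (x ⊔ rconv x)

/-- Forest components: fc(x) = x^* ∘ (xᵀ)^*. -/
def fc (x : A → A → Prop) : A → A → Prop := rcomp (rstar x) (rstar (rconv x))

/-- The vector of roots of the forest p: roots(p) = (p ⊓ 1)∘⊤. -/
def rroots (p : A → A → Prop) : A → A → Prop := rcomp (p ⊓ rid) ⊤

/-- The root of x in p: root(p,x) = ((pᵀ)^*∘x) ⊓ roots(p). -/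
def rroot (p x : A → A → Prop) : A → A → Prop := rcomp (rstar (rconv p)) x ⊓ rroots p

theorem rtotal_iff {r : A → A → Prop} : RTotal r ↔ ∀ a, ∃ b, r a b := by
  constructor
  · intro h a
    obtain ⟨b, hb, -⟩ := h a a rfl
    exact ⟨b, hb⟩
  · rintro h a _ rfl
    obtain ⟨b, hb⟩ := h a
    exact ⟨b, hb, hb⟩

theorem rsurjective_iff {r : A → A → Prop} : RSurjective r ↔ ∀ b, ∃ a, r a b := by
  constructor
  · intro h b
    obtain ⟨a, ha, -⟩ := h b b rfl
    exact ⟨a, ha⟩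
  · rintro h b _ rfl
    obtain ⟨a, ha⟩ := h b
    exact ⟨a, ha, ha⟩

theorem RVector.apply_of_apply {y : A → A → Prop} (hy : RVector y) {a b : A} (h : y a b) (c : A) :
    y a c := by
  rw [← hy]
  exact ⟨b, h, trivial⟩

theorem write_total {A : Type*} (x y z : A → A → Prop)
    (hx : RTotal x) (hy : RVector y) (hz : RSurjective z) :
    RTotal (rwrite x y z) := by
  rw [rtotal_iff] at hx ⊢
  rw [rsurjective_iff] at hz
  intro a
  by_cases hya : ∃ c, y a c
  · obtain ⟨c, hc⟩ := hya
    obtain ⟨d, hd⟩ := hz a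
    exact ⟨d, Or.inl ⟨hy.apply_of_apply hc d, hd⟩⟩
  · obtain ⟨d, hd⟩ := hx a
    exact ⟨d, Or.inr ⟨fun hyd => hya ⟨d, hyd⟩, hd⟩⟩
end

section
/- Let x and y be binary relations on a type A with y a point. Then writing back the value read at index y leaves the array unchanged: x[y↦x[y]] = x, i.e., (y ⊓ (xᵀ∘y)ᵀ) ⊔ (yᶜ ⊓ x) = x (the get-put lens law). -/
variable {A : Type*}

theorem RVector.rel_of_rel {y : A → A → Prop} (hy : RVector y) {a b : A} (hab : y a b) (c : A) :
    y a c := by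
  rw [← hy]
  exact ⟨b, hab, trivial⟩

theorem inf_rconv_rread {y : A → A → Prop} (hv : RVector y) (hi : RInjective y)
    (x : A → A → Prop) : y ⊓ rconv (rread x y) = y ⊓ x := by
  funext a b
  refine propext ⟨fun ⟨hab, c, hxcb, hyca⟩ => ⟨hab, ?_⟩, fun ⟨hab, hxab⟩ => ⟨hab, a, hxab, ?_⟩⟩
  · have hca : c = a := hi c a ⟨b, hv.rel_of_rel hyca b, hab⟩
    exact hca ▸ hxcb
  · exact hv.rel_of_rel hab a

theorem get_put {A : Type*} (x y : A → A → Prop) (hy : RPoint y) :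
    rwrite x y (rread x y) = x := by
  obtain ⟨hv, hi, -⟩ := hy
  rw [rwrite, inf_rconv_rread hv hi, inf_comm y, inf_comm yᶜ, sup_inf_inf_compl]
end

section
/- Let x be a univalent binary relation on a type A. Then fc(x) = wcc(x), i.e., x^*∘(xᵀ)^* = (x ⊔ xᵀ)^*: for univalent relations the forest-components relation coincides with the weakly-connected-components closure. -/
variable {A : Type*}

/-! By univalence, a nontrivial `x`-path out of `b` must start with the unique `x`-successor `c`
of `b`. Hence a factorisation `a x^* m (xᵀ)^* b` survives an extra `x`-step `b → c`: either `m = b`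
and the step extends the `x^*` part, or `m` is reachable from `c`. An `xᵀ`-step extends the `(xᵀ)^*`
part directly, so `fc x` is closed under `x ⊔ xᵀ`-steps and contains `wcc x`. -/

theorem rstar_rconv_iff {x : A → A → Prop} {a b : A} :
    rstar (rconv x) a b ↔ rstar x b a :=
  Relation.reflTransGen_swap

theorem RUnivalent.eq_of_rel {x : A → A → Prop} (hx : RUnivalent x) {u v w : A}
    (huv : x u v) (huw : x u w) : v = w :=
  hx v w ⟨u, huv, huw⟩

theorem RUnivalent.eq_or_rstar_of_rel {x : A → A → Prop} (hx : RUnivalent x)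
    {b c m : A} (hbc : x b c) (hbm : rstar x b m) : b = m ∨ rstar x c m := by
  rcases Relation.ReflTransGen.cases_head_iff.mp hbm with hbm | ⟨d, hbd, hdm⟩
  · exact Or.inl hbm
  · exact Or.inr (hx.eq_of_rel hbd hbc ▸ hdm)

theorem fc_le_wcc (x : A → A → Prop) : fc x ≤ wcc x := by
  rintro a b ⟨m, ham, hmb⟩
  exact Relation.ReflTransGen.trans (Relation.ReflTransGen.mono (fun _ _ => Or.inl) _ _ ham)
    (Relation.ReflTransGen.mono (fun _ _ => Or.inr) _ _ hmb)

theorem RUnivalent.wcc_le_fc {x : A → A → Prop} (hx : RUnivalent x) :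
    wcc x ≤ fc x := by
  intro a b hab
  induction hab with
  | refl => exact ⟨a, .refl, .refl⟩
  | @tail b c _ hstep ih =>
    obtain ⟨m, ham, hmb⟩ := ih
    rcases hstep with hbc | hcb
    · rcases hx.eq_or_rstar_of_rel hbc (rstar_rconv_iff.mp hmb) with rfl | hcm
      · exact ⟨c, ham.tail hbc, .refl⟩
      · exact ⟨m, ham, rstar_rconv_iff.mpr hcm⟩
    · exact ⟨m, ham, hmb.tail hcb⟩

theorem fc_wcc {A : Type*} (x : A → A → Prop) (hx : RUnivalent x) :
    fc x = wcc x :=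
  le_antisymm (fc_le_wcc x) hx.wcc_le_fc
end
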